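/- (Dumbbell estimate in the proof of Lemma 2.7.) For ε ∈ (0, 1/2), let Ω_ε ⊆ ℝ² be the open set given as the union of the open unit disc centered at the origin, the open rectangle (0, 1+2ε) × (−ε⁶/2, ε⁶/2), and the open disc of center (1+2ε, 0) and radius ε. Then the first nontrivial Neumann eigenvalue tends to zero: μ₁(Ω_ε) → 0 as ε → 0⁺. -/

import Mathlib

open MeasureTheory Filter Set Real RealInnerProductSpace

noncomputable section

abbrev E2 : Type := EuclideanSpace ℝ (Fin 2)

/-- First Dirichlet eigenvalue, variational characterization. -/
noncomputable def dEig1 (Ω : Set E2) : ℝ :=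
  sInf { R : ℝ | ∃ u : E2 → ℝ, ContDiff ℝ (⊤ : ℕ∞) u ∧ HasCompactSupport u ∧
    tsupport u ⊆ Ω ∧ (∫ x, (u x)^2) ≠ 0 ∧
    R = (∫ x, ‖fderiv ℝ u x‖^2) / (∫ x, (u x)^2) }

/-- First nontrivial Neumann eigenvalue, variational characterization. -/
noncomputable def nEig1 (Ω : Set E2) : ℝ :=
  sInf { R : ℝ | ∃ u : E2 → ℝ, ContDiff ℝ (⊤ : ℕ∞) u ∧ (∫ x in Ω, u x) = 0 ∧
    (∫ x in Ω, (u x)^2) ≠ 0 ∧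
    R = (∫ x in Ω, ‖fderiv ℝ u x‖^2) / (∫ x in Ω, (u x)^2) }

/-- The open unit disc in the plane. -/
def unitDisc : Set E2 := Metric.ball 0 1

/-- The dumbbell domain `Ω_ε`: the union of the open unit disc centered at the origin, the thin
open rectangle `(0, 1+2ε) × (−ε⁶/2, ε⁶/2)` and the open disc of center `(1+2ε, 0)` and
radius `ε`. -/
def dumbbell (ε : ℝ) : Set E2 :=
  Metric.ball (0 : E2) 1 ∪
  { p : E2 | p 0 ∈ Set.Ioo (0:ℝ) (1 + 2*ε) ∧ p 1 ∈ Set.Ioo (-(ε^6)/2) (ε^6/2) } ∪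
  Metric.ball ((WithLp.equiv 2 (Fin 2 → ℝ)).symm ![1 + 2*ε, 0]) ε

lemma DB.abs_coord_le (p : E2) (i : Fin 2) : |p i| ≤ ‖p‖ := by
  rw [EuclideanSpace.norm_eq p, Fin.sum_univ_two, ← Real.sqrt_sq_eq_abs]
  apply Real.sqrt_le_sqrt
  have h0 : ‖p 0‖^2 = p 0 ^ 2 := sq_abs _
  have h1 : ‖p 1‖^2 = p 1 ^ 2 := sq_abs _
  rw [h0, h1]
  fin_cases i
  · show p 0 ^ 2 ≤ _; nlinarith [sq_nonneg (p 1)]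
  · show p 1 ^ 2 ≤ _; nlinarith [sq_nonneg (p 0)]

lemma DB.norm_proj_le (i : Fin 2) : ‖(EuclideanSpace.proj (𝕜 := ℝ) i : E2 →L[ℝ] ℝ)‖ ≤ 1 :=
  ContinuousLinearMap.opNorm_le_bound _ zero_le_one fun p => by
    simpa using DB.abs_coord_le p i

lemma DB.fderiv_comp_proj (f : ℝ → ℝ) (hf : ContDiff ℝ (⊤ : ℕ∞) f) (x : E2) :
    fderiv ℝ (fun p : E2 => f (p 0)) x
      = deriv f (x 0) • (EuclideanSpace.proj (𝕜 := ℝ) (0 : Fin 2)) := by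
  have h1 : (fun p : E2 => f (p 0)) = f ∘ (EuclideanSpace.proj (𝕜 := ℝ) (0 : Fin 2)) := rfl
  rw [h1, fderiv_comp _ ((hf.differentiable (by simp)).differentiableAt)
      (EuclideanSpace.proj (𝕜 := ℝ) (0:Fin 2)).differentiableAt]
  ext w
  simp only [ContinuousLinearMap.fderiv, ContinuousLinearMap.comp_apply,
    ContinuousLinearMap.smul_apply, smul_eq_mul]
  have h2 : (EuclideanSpace.proj (𝕜 := ℝ) (0:Fin 2)) w
      = ((EuclideanSpace.proj (𝕜 := ℝ) (0:Fin 2)) w) • (1:ℝ) := by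
    rw [smul_eq_mul, mul_one]
  rw [h2, ContinuousLinearMap.map_smul, fderiv_apply_one_eq_deriv]
  simp only [smul_eq_mul, mul_one]
  exact mul_comm _ _

lemma DB.volume_box (a b c d : ℝ) :
    volume {p : E2 | p 0 ∈ Ioo a b ∧ p 1 ∈ Ioo c d} =
      ENNReal.ofReal (b - a) * ENNReal.ofReal (d - c) := by
  have hmp := EuclideanSpace.volume_preserving_symm_measurableEquiv_toLp (Fin 2)
  have : {p : E2 | p 0 ∈ Ioo a b ∧ p 1 ∈ Ioo c d} =
      (MeasurableEquiv.toLp 2 (Fin 2 → ℝ)).symm ⁻¹' (Set.univ.pi ![Ioo a b, Ioo c d]) := by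
    ext p
    simp [Fin.forall_fin_two]
  rw [this, MeasurePreserving.measure_preimage hmp
    ((MeasurableSet.univ_pi (fun i => by fin_cases i <;> exact measurableSet_Ioo)).nullMeasurableSet),
    volume_pi_pi]
  simp [Fin.prod_univ_two]

lemma DB.isOpen_box (a b c d : ℝ) :
    IsOpen {p : E2 | p 0 ∈ Ioo a b ∧ p 1 ∈ Ioo c d} := by
  have : {p : E2 | p 0 ∈ Ioo a b ∧ p 1 ∈ Ioo c d}
      = (EuclideanSpace.proj (𝕜 := ℝ) (0:Fin 2)) ⁻¹' (Ioo a b)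
        ∩ (EuclideanSpace.proj (𝕜 := ℝ) (1:Fin 2)) ⁻¹' (Ioo c d) := rfl
  rw [this]
  exact (isOpen_Ioo.preimage (EuclideanSpace.proj (0:Fin 2)).continuous).inter
    (isOpen_Ioo.preimage (EuclideanSpace.proj (1:Fin 2)).continuous)

lemma DB.mem_ball_iff (p q : E2) (r : ℝ) (hr : 0 < r) :
    p ∈ Metric.ball q r ↔ (p 0 - q 0)^2 + (p 1 - q 1)^2 < r^2 := by
  rw [Metric.mem_ball, EuclideanSpace.dist_eq, Fin.sum_univ_two, Real.sqrt_lt' hr]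
  have h0 : dist (p 0) (q 0) ^ 2 = (p 0 - q 0)^2 := by rw [Real.dist_eq, sq_abs]
  have h1 : dist (p 1) (q 1) ^ 2 = (p 1 - q 1)^2 := by rw [Real.dist_eq, sq_abs]
  rw [h0, h1]

lemma DB.nEig1_nonneg (Ω : Set E2) : 0 ≤ nEig1 Ω := by
  apply Real.sInf_nonneg
  rintro R ⟨u, -, -, -, rfl⟩
  apply div_nonneg
  · exact integral_nonneg fun x => by positivity
  · exact integral_nonneg fun x => by positivity

/-- exponential tail beats polynomial -/
lemma DB.exp_tail (ε : ℝ) (hε0 : 0 < ε) : Real.exp (-(1/ε)) ≤ 823543 * ε^7 := by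
  have hs : (0:ℝ) < 1/(7*ε) := by positivity
  have h1 : (1/(7*ε))^7 ≤ Real.exp (1/ε) := by
    have h2 : 1 + 1/(7*ε) ≤ Real.exp (1/(7*ε)) := by
      linarith [Real.add_one_le_exp (1/(7*ε))]
    have h3 : (1/(7*ε))^7 ≤ (Real.exp (1/(7*ε)))^7 := by
      apply pow_le_pow_left₀ hs.le
      linarith
    have h4 : (Real.exp (1/(7*ε)))^7 = Real.exp (7 * (1/(7*ε))) := by
      rw [← Real.exp_nat_mul]
      norm_num
    rw [h4] at h3
    have h5 : 7 * (1/(7*ε)) = 1/ε := by field_simp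
    rwa [h5] at h3
  have h6 : Real.exp (-(1/ε)) = (Real.exp (1/ε))⁻¹ := by
    rw [Real.exp_neg]
  rw [h6]
  have h7 : ((1/(7*ε))^7)⁻¹ = 823543 * ε^7 := by
    rw [one_div, inv_pow, inv_inv]
    ring
  calc (Real.exp (1/ε))⁻¹ ≤ ((1/(7*ε))^7)⁻¹ := by
        apply inv_anti₀ (by positivity) h1
    _ = 823543 * ε^7 := h7

set_option maxHeartbeats 1000000 in
lemma DB.sigmoid (ε : ℝ) (hε0 : 0 < ε) (hεh : ε < 1/2) :
    ∃ h : ℝ → ℝ, ContDiff ℝ (⊤ : ℕ∞) h ∧ (∀ y, 0 ≤ h y) ∧ (∀ y, h y ≤ 1) ∧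
      (∀ y, 0 ≤ deriv h y) ∧ (∀ y, deriv h y ≤ ε⁻¹^2) ∧
      (∀ y, ε/2 ≤ |y - (1 + ε/2)| → deriv h y ≤ ε⁻¹^2 * Real.exp (-(1/(2*ε)))) ∧
      (∀ y, y ≤ 7/10 → h y ≤ 5/16) ∧ (∀ y, 1 + 3*ε/2 ≤ y → 3/4 ≤ h y) := by
  set K : ℝ := ε⁻¹^2 with hKdef
  set a : ℝ := 1 + ε/2 with hadef
  have hK0 : 0 < K := by positivity
  have hK4 : 4 ≤ K := by
    rw [hKdef]
    have h2 : (2:ℝ) ≤ ε⁻¹ := by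
      rw [← one_div, le_div_iff₀ hε0]
      linarith
    nlinarith
  set Ef : ℝ → ℝ := fun y => Real.exp (-K * (y - a)) with hEdef
  set h : ℝ → ℝ := fun y => (1 + Ef y)⁻¹ with hhdef
  have hEpos : ∀ y, 0 < Ef y := fun y => Real.exp_pos _
  have hden : ∀ y, 0 < 1 + Ef y := fun y => by have := hEpos y; linarith
  have hh_smooth : ContDiff ℝ (⊤ : ℕ∞) h := by
    apply ContDiff.inv
    · exact contDiff_const.add (Real.contDiff_exp.comp
        (contDiff_const.mul (contDiff_id.sub contDiff_const)))
    · exact fun y => (hden y).ne'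
  have hh_deriv : ∀ y, deriv h y = K * Ef y / (1 + Ef y)^2 := by
    intro y
    have hinner : HasDerivAt (fun y : ℝ => -K * (y - a)) (-K) y := by
      simpa using ((hasDerivAt_id y).sub_const a).const_mul (-K)
    have hE : HasDerivAt Ef (Ef y * (-K)) y := hinner.exp
    have hsum : HasDerivAt (fun y => 1 + Ef y) (Ef y * (-K)) y := hE.const_add 1
    have hinv : HasDerivAt h (-(Ef y * (-K)) / (1 + Ef y)^2) y := hsum.inv (hden y).ne'
    rw [hinv.deriv]
    ring
  have hh_deriv_nonneg : ∀ y, 0 ≤ deriv h y := by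
    intro y
    rw [hh_deriv y]
    have := hEpos y
    positivity
  have hD1 : ∀ y, deriv h y ≤ K := by
    intro y
    rw [hh_deriv y]
    rw [div_le_iff₀ (by nlinarith [hEpos y, hden y])]
    nlinarith [mul_pos hK0 (hEpos y), mul_nonneg hK0.le (sq_nonneg (Ef y)), hK0.le]
  have hD_tail : ∀ y, ε/2 ≤ |y - a| → deriv h y ≤ K * Real.exp (-(1/(2*ε))) := by
    intro y hy
    have hKe : K * (ε/2) = 1/(2*ε) := by
      rw [hKdef]; field_simp
    rcases le_total a y with hle | hle
    · -- y - a ≥ ε/2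
      have hya : ε/2 ≤ y - a := by rwa [abs_of_nonneg (by linarith)] at hy
      have hEle : Ef y ≤ Real.exp (-(1/(2*ε))) := by
        rw [hEdef]
        simp only
        rw [Real.exp_le_exp, ← hKe]
        nlinarith
      rw [hh_deriv y]
      calc K * Ef y / (1 + Ef y)^2 ≤ K * Ef y := by
            rw [div_le_iff₀ (by nlinarith [hEpos y])]
            nlinarith [mul_nonneg (mul_nonneg hK0.le (hEpos y).le) (hEpos y).le,
              mul_nonneg (mul_nonneg hK0.le (hEpos y).le) (sq_nonneg (Ef y))]
        _ ≤ K * Real.exp (-(1/(2*ε))) := by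
            apply mul_le_mul_of_nonneg_left hEle hK0.le
    · -- y - a ≤ -ε/2
      have hya : y - a ≤ -(ε/2) := by
        rw [abs_of_nonpos (by linarith)] at hy
        linarith
      have hEge : Real.exp (1/(2*ε)) ≤ Ef y := by
        rw [hEdef]
        simp only
        rw [Real.exp_le_exp, ← hKe]
        nlinarith
      rw [hh_deriv y]
      have hEy := hEpos y
      have hexp2 : (0:ℝ) < Real.exp (1/(2*ε)) := Real.exp_pos _
      calc K * Ef y / (1 + Ef y)^2 ≤ K / Ef y := by
            rw [div_le_div_iff₀ (by nlinarith) hEy]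
            nlinarith
        _ ≤ K * Real.exp (-(1/(2*ε))) := by
            rw [Real.exp_neg, div_eq_mul_inv]
            apply mul_le_mul_of_nonneg_left _ hK0.le
            apply inv_anti₀ hexp2 hEge
  have hh_nonneg : ∀ y, 0 ≤ h y := fun y => (inv_pos.2 (hden y)).le
  have hh_le_one : ∀ y, h y ≤ 1 := by
    intro y
    rw [hhdef]
    simp only
    rw [inv_le_one_iff₀]
    right
    linarith [hEpos y]
  have hS1val : ∀ y : ℝ, y ≤ 7/10 → h y ≤ 5/16 := by
    intro y hy
    have harg : 3/10 ≤ -K * (y - a) := by nlinarith [hK4]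
    have hEge : 1 + K * (3/10) ≤ Ef y := by
      rw [hEdef]; simp only
      calc 1 + K * (3/10) = 1 + (3/10) * K := by ring
        _ ≤ 1 + (-K * (y-a)) := by nlinarith [hK4]
        _ ≤ Real.exp (-K * (y-a)) := by linarith [Real.add_one_le_exp (-K * (y-a))]
    have hEge' : (11/5 : ℝ) ≤ Ef y := by nlinarith [hK4]
    rw [hhdef]; simp only
    rw [inv_le_comm₀ (hden y) (by norm_num)]
    linarith
  have hS2val : ∀ y : ℝ, 1 + 3*ε/2 ≤ y → 3/4 ≤ h y := by
    intro y hy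
    have harg : -K * (y - a) ≤ -(1/ε) := by
      have h1 : ε ≤ y - a := by rw [hadef]; linarith
      have h2 : K * ε = 1/ε := by rw [hKdef]; field_simp
      nlinarith
    have hEle : Ef y ≤ 1/3 := by
      have h3 : Ef y ≤ Real.exp (-(1/ε)) := by
        rw [hEdef]; simp only
        rw [Real.exp_le_exp]; exact harg
      have h4 : Real.exp (-(1/ε)) ≤ (1 + 1/ε)⁻¹ := by
        rw [Real.exp_neg]
        exact inv_anti₀ (by positivity) (by linarith [Real.add_one_le_exp (1/ε)])
      have h5 : (2:ℝ) < 1/ε := by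
        rw [lt_div_iff₀ hε0]; linarith
      have h6 : (1 + 1/ε)⁻¹ ≤ (3:ℝ)⁻¹ := by
        apply inv_anti₀ (by norm_num) (by linarith)
      calc Ef y ≤ (1 + 1/ε)⁻¹ := le_trans h3 h4
        _ ≤ 1/3 := by rw [← one_div] at h6 ⊢; linarith
    rw [hhdef]; simp only
    rw [le_inv_comm₀ (by norm_num) (hden y)]
    linarith
  exact ⟨h, hh_smooth, hh_nonneg, hh_le_one, hh_deriv_nonneg, hD1, hD_tail, fun y hy => hS1val y hy, hS2val⟩

set_option maxHeartbeats 1000000 in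
lemma DB.key (ε : ℝ) (hε0 : 0 < ε) (hεh : ε < 1/2) :
    nEig1 (dumbbell ε) ≤ 1200000000 * ε := by
  obtain ⟨h, hh_smooth, hh_nonneg, hh_le_one, hh_deriv_nonneg, hD1', hD_tail', hS1val, hS2val⟩ :=
    DB.sigmoid ε hε0 hεh
  set Ω := dumbbell ε with hΩdef
  set K : ℝ := ε⁻¹^2 with hKdef
  set a : ℝ := 1 + ε/2 with hadef
  have hK0 : 0 < K := by positivity
  have hD1 : ∀ y, deriv h y ≤ K := hD1'
  have hD_tail : ∀ y, ε/2 ≤ |y - a| → deriv h y ≤ K * Real.exp (-(1/(2*ε))) := hD_tail'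
  -- the test function
  set w : E2 → ℝ := fun p => h (p 0) with hwdef
  have hw_cont : Continuous w :=
    hh_smooth.continuous.comp (EuclideanSpace.proj (0:Fin 2)).continuous
  -- measurability and measure of Ω
  have hmid_open : IsOpen { p : E2 | p 0 ∈ Set.Ioo (0:ℝ) (1 + 2*ε) ∧ p 1 ∈ Set.Ioo (-(ε^6)/2) (ε^6/2) } :=
    DB.isOpen_box _ _ _ _
  have hΩopen : IsOpen Ω := (Metric.isOpen_ball.union hmid_open).union Metric.isOpen_ball
  have hΩmeas : MeasurableSet Ω := hΩopen.measurableSet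
  set q : E2 := (WithLp.equiv 2 (Fin 2 → ℝ)).symm ![1 + 2*ε, 0] with hqdef
  have hq0 : q 0 = 1 + 2*ε := rfl
  have hq1 : q 1 = 0 := rfl
  have hε6 : (0:ℝ) < ε^6 := by positivity
  have he6 : ε^6 < 1 := by
    have h1 : ε^6 ≤ ε := by
      apply pow_le_of_le_one hε0.le (by linarith) (by norm_num)
    linarith
  -- Ω is contained in a big box
  set BB : Set E2 := {p : E2 | p 0 ∈ Ioo (-4:ℝ) 4 ∧ p 1 ∈ Ioo (-4:ℝ) 4} with hBBdef
  have hΩsub : Ω ⊆ BB := by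
    rintro p ((hp | hp) | hp)
    · rw [DB.mem_ball_iff p 0 1 one_pos] at hp
      simp only [PiLp.zero_apply] at hp
      constructor
      · constructor <;> nlinarith [sq_nonneg (p 0), sq_nonneg (p 1)]
      · constructor <;> nlinarith [sq_nonneg (p 0), sq_nonneg (p 1)]
    · obtain ⟨⟨h1, h2⟩, h3, h4⟩ := hp
      constructor
      · constructor <;> [linarith; linarith]
      · constructor <;> [linarith; linarith]
    · rw [DB.mem_ball_iff p q ε hε0, hq0, hq1] at hp
      constructor
      · constructor <;> nlinarith [sq_nonneg (p 0), sq_nonneg (p 1), sq_nonneg (p 0 - (1+2*ε))]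
      · constructor <;> nlinarith [sq_nonneg (p 0), sq_nonneg (p 1), sq_nonneg (p 0 - (1+2*ε))]
  have hBBvol : volume BB = ENNReal.ofReal 8 * ENNReal.ofReal 8 := by
    rw [hBBdef, DB.volume_box]
    norm_num
  have hBBfin : volume BB ≠ ⊤ := by
    rw [hBBvol]
    exact ENNReal.mul_ne_top ENNReal.ofReal_ne_top ENNReal.ofReal_ne_top
  have hΩfin : volume Ω < ⊤ :=
    lt_of_le_of_lt (measure_mono hΩsub) (lt_of_le_of_lt le_rfl (hBBvol ▸ ENNReal.mul_lt_top
      ENNReal.ofReal_lt_top ENNReal.ofReal_lt_top))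
  have hΩvol64 : (volume Ω).toReal ≤ 64 := by
    calc (volume Ω).toReal ≤ (volume BB).toReal := ENNReal.toReal_mono hBBfin (measure_mono hΩsub)
      _ = 64 := by
          rw [hBBvol, ENNReal.toReal_mul, ENNReal.toReal_ofReal (by norm_num : (0:ℝ) ≤ 8)]
          norm_num
  have hΩpos : 0 < volume Ω := by
    apply lt_of_lt_of_le (Metric.measure_ball_pos volume (0:E2) one_pos)
    exact measure_mono (fun p hp => Or.inl (Or.inl hp))
  set V : ℝ := (volume Ω).toReal with hVdef
  have hVpos : 0 < V := ENNReal.toReal_pos hΩpos.ne' hΩfin.ne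
  -- integrability of bounded continuous functions on Ω
  have hint_of_bdd : ∀ (g : E2 → ℝ) (C : ℝ), Continuous g → (∀ x, |g x| ≤ C) →
      IntegrableOn g Ω volume := by
    intro g C hg hC
    have hconst : IntegrableOn (fun _ : E2 => C) Ω volume :=
      integrableOn_const hΩfin.ne
    exact Integrable.mono' hconst hg.aestronglyMeasurable.restrict
      (Filter.Eventually.of_forall fun x => by simpa using hC x)
  have hw_bdd : ∀ x : E2, |w x| ≤ 1 := by
    intro x
    rw [abs_of_nonneg (hh_nonneg _)]
    exact hh_le_one _
  have hw_int : IntegrableOn w Ω volume := hint_of_bdd w 1 hw_cont hw_bdd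
  set c : ℝ := (∫ x in Ω, w x) / V with hcdef
  set v : E2 → ℝ := fun p => h (p 0) - c with hvdef
  have hv_smooth : ContDiff ℝ (⊤ : ℕ∞) v :=
    (hh_smooth.comp (EuclideanSpace.proj (0:Fin 2)).contDiff).sub contDiff_const
  have hv_bdd : ∀ x, |v x| ≤ 1 + |c| := by
    intro x
    calc |v x| ≤ |h (x 0)| + |c| := abs_sub _ _
      _ ≤ 1 + |c| := by
          have := hw_bdd x
          simp only [hwdef] at this
          linarith
  have hv2_int : IntegrableOn (fun x => (v x)^2) Ω volume := by
    apply hint_of_bdd _ ((1 + |c|)^2)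
    · exact ((hv_smooth.continuous).pow 2)
    · intro x
      rw [abs_of_nonneg (sq_nonneg _)]
      calc (v x)^2 = |v x|^2 := (sq_abs _).symm
        _ ≤ (1 + |c|)^2 := pow_le_pow_left₀ (abs_nonneg _) (hv_bdd x) 2
  -- mean zero
  have hmean : (∫ x in Ω, v x) = 0 := by
    have hsub : (∫ x in Ω, v x) = (∫ x in Ω, w x) - (∫ x in Ω, (fun _ => c) x) := by
      apply integral_sub hw_int (integrableOn_const hΩfin.ne)
    rw [hsub, setIntegral_const, smul_eq_mul, hcdef]
    field_simp
    simp [hVdef, measureReal_def]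
  -- fderiv of v
  have hfderiv_v : ∀ x : E2, fderiv ℝ v x
      = deriv h (x 0) • (EuclideanSpace.proj (𝕜 := ℝ) (0 : Fin 2)) := by
    intro x
    have heq : fderiv ℝ v x = fderiv ℝ (fun p : E2 => h (p 0)) x := by
      rw [hvdef]
      exact fderiv_sub_const c
    rw [heq, DB.fderiv_comp_proj h hh_smooth x]
  have hfderiv_norm : ∀ x : E2, ‖fderiv ℝ v x‖ ≤ deriv h (x 0) := by
    intro x
    rw [hfderiv_v x, norm_smul]
    calc ‖deriv h (x 0)‖ * ‖(EuclideanSpace.proj (𝕜 := ℝ) (0:Fin 2) : E2 →L[ℝ] ℝ)‖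
        ≤ |deriv h (x 0)| * 1 := mul_le_mul_of_nonneg_left (DB.norm_proj_le 0) (abs_nonneg _)
      _ = deriv h (x 0) := by rw [mul_one, abs_of_nonneg (hh_deriv_nonneg _)]
  have hfderiv_bound : ∀ x : E2, ‖fderiv ℝ v x‖ ≤ K :=
    fun x => le_trans (hfderiv_norm x) (hD1 _)
  have hE_int : IntegrableOn (fun x => ‖fderiv ℝ v x‖^2) Ω volume := by
    apply hint_of_bdd _ (K^2)
    · exact (hv_smooth.continuous_fderiv (by simp)).norm.pow 2
    · intro x
      rw [abs_of_nonneg (by positivity)]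
      exact pow_le_pow_left₀ (norm_nonneg _) (hfderiv_bound x) 2
  -- the two boxes for the mass lower bound
  set S1 : Set E2 := {p : E2 | p 0 ∈ Ioo (-(7/10):ℝ) (7/10) ∧ p 1 ∈ Ioo (-(7/10):ℝ) (7/10)} with hS1def
  set S2 : Set E2 := {p : E2 | p 0 ∈ Ioo (1 + 3*ε/2) (1 + 5*ε/2) ∧ p 1 ∈ Ioo (-(ε/2)) (ε/2)} with hS2def
  have hS1meas : MeasurableSet S1 := (DB.isOpen_box _ _ _ _).measurableSet
  have hS2meas : MeasurableSet S2 := (DB.isOpen_box _ _ _ _).measurableSet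
  have hS1sub : S1 ⊆ Ω := by
    rintro p ⟨⟨h1, h2⟩, h3, h4⟩
    left; left
    rw [DB.mem_ball_iff p 0 1 one_pos]
    simp only [PiLp.zero_apply]
    nlinarith
  have hS2sub : S2 ⊆ Ω := by
    rintro p ⟨⟨h1, h2⟩, h3, h4⟩
    right
    rw [DB.mem_ball_iff p q ε hε0, hq0, hq1]
    nlinarith
  have hS1vol : (volume S1).toReal = 49/25 := by
    rw [hS1def, DB.volume_box, ENNReal.toReal_mul,
      ENNReal.toReal_ofReal (by norm_num : (0:ℝ) ≤ 7/10 - -(7/10))]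
    norm_num
  have hS2vol : (volume S2).toReal = ε^2 := by
    rw [hS2def, DB.volume_box]
    have e1 : (1 + 5*ε/2) - (1 + 3*ε/2) = ε := by ring
    have e2 : (ε/2) - (-(ε/2)) = ε := by ring
    rw [e1, e2, ENNReal.toReal_mul, ENNReal.toReal_ofReal hε0.le]
    ring
  have hv2_nonneg : (0:E2 → ℝ) ≤ᵐ[volume.restrict Ω] fun x => (v x)^2 :=
    Filter.Eventually.of_forall fun x => sq_nonneg _
  -- mass lower bound
  have hmass_ge : ε^2 * (49/1024) ≤ ∫ x in Ω, (v x)^2 := by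
    rcases le_or_gt (17/32 : ℝ) c with hc | hc
    · -- use S1
      have hpt : ∀ p ∈ S1, (7/32:ℝ)^2 ≤ (v p)^2 := by
        rintro p ⟨⟨h1, h2⟩, -⟩
        have hval : h (p 0) ≤ 5/16 := hS1val _ (by linarith)
        have hgap : 7/32 ≤ c - h (p 0) := by linarith
        calc (7/32:ℝ)^2 ≤ (c - h (p 0))^2 := pow_le_pow_left₀ (by norm_num) hgap 2
          _ = (v p)^2 := by rw [hvdef]; ring
      have hstep : ε^2 * (49/1024) ≤ ∫ x in S1, (v x)^2 := by
        have h1 : (∫ x in S1, (7/32:ℝ)^2) ≤ ∫ x in S1, (v x)^2 := by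
          apply setIntegral_mono_on
            (integrableOn_const (lt_of_le_of_lt (measure_mono hS1sub) hΩfin).ne)
            (hv2_int.mono_set hS1sub) hS1meas hpt
        rw [setIntegral_const, smul_eq_mul, measureReal_def, hS1vol] at h1
        nlinarith
      calc ε^2 * (49/1024) ≤ ∫ x in S1, (v x)^2 := hstep
        _ ≤ ∫ x in Ω, (v x)^2 :=
            setIntegral_mono_set hv2_int hv2_nonneg (HasSubset.Subset.eventuallyLE hS1sub)
    · -- use S2
      have hpt : ∀ p ∈ S2, (7/32:ℝ)^2 ≤ (v p)^2 := by
        rintro p ⟨⟨h1, h2⟩, -⟩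
        have hval : 3/4 ≤ h (p 0) := hS2val _ (by linarith)
        have hgap : 7/32 ≤ h (p 0) - c := by linarith
        calc (7/32:ℝ)^2 ≤ (h (p 0) - c)^2 := pow_le_pow_left₀ (by norm_num) hgap 2
          _ = (v p)^2 := by rw [hvdef]
      have hstep : ε^2 * (49/1024) ≤ ∫ x in S2, (v x)^2 := by
        have h1 : (∫ x in S2, (7/32:ℝ)^2) ≤ ∫ x in S2, (v x)^2 := by
          apply setIntegral_mono_on
            (integrableOn_const (lt_of_le_of_lt (measure_mono hS2sub) hΩfin).ne)
            (hv2_int.mono_set hS2sub) hS2meas hpt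
        rw [setIntegral_const, smul_eq_mul, measureReal_def, hS2vol] at h1
        nlinarith
      calc ε^2 * (49/1024) ≤ ∫ x in S2, (v x)^2 := hstep
        _ ≤ ∫ x in Ω, (v x)^2 :=
            setIntegral_mono_set hv2_int hv2_nonneg (HasSubset.Subset.eventuallyLE hS2sub)
  have hmass_pos : 0 < ∫ x in Ω, (v x)^2 := lt_of_lt_of_le (by positivity) hmass_ge
  -- energy upper bound
  set Rp : Set E2 := {p : E2 | p 0 ∈ Ioo (1:ℝ) (1 + ε) ∧ p 1 ∈ Ioo (-(ε^6)/2) (ε^6/2)} with hRpdef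
  have hRpmeas : MeasurableSet Rp := (DB.isOpen_box _ _ _ _).measurableSet
  -- on Ω \ Rp the coordinate is far from the transition point
  have htail : ∀ x ∈ Ω \ Rp, ε/2 ≤ |x 0 - a| := by
    rintro x ⟨hx, hxn⟩
    have hfar : x 0 ≤ 1 ∨ 1 + ε ≤ x 0 := by
      rcases hx with ((hb | hm) | hs)
      · left
        rw [DB.mem_ball_iff x 0 1 one_pos] at hb
        simp only [PiLp.zero_apply] at hb
        nlinarith [sq_nonneg (x 1)]
      · by_contra hcon
        push_neg at hcon
        exact hxn ⟨⟨by linarith [hcon.1], by linarith [hcon.2]⟩, hm.2⟩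
      · right
        rw [DB.mem_ball_iff x q ε hε0, hq0, hq1] at hs
        nlinarith [sq_nonneg (x 1)]
    rcases hfar with hf | hf
    · rw [abs_of_nonpos (by rw [hadef]; linarith)]
      rw [hadef]; linarith
    · rw [abs_of_nonneg (by rw [hadef]; linarith)]
      rw [hadef]; linarith
  have henergy : (∫ x in Ω, ‖fderiv ℝ v x‖^2) ≤ 52706753 * ε^3 := by
    have hsplit : (∫ x in Ω ∩ Rp, ‖fderiv ℝ v x‖^2) + (∫ x in Ω \ Rp, ‖fderiv ℝ v x‖^2)
        = ∫ x in Ω, ‖fderiv ℝ v x‖^2 := integral_inter_add_diff hRpmeas hE_int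
    -- strip part
    have hRvol : (volume (Ω ∩ Rp)).toReal ≤ ε^7 := by
      have h1 : volume (Ω ∩ Rp) ≤ volume Rp := measure_mono Set.inter_subset_right
      have h2 : volume Rp = ENNReal.ofReal ε * ENNReal.ofReal (ε^6) := by
        rw [hRpdef, DB.volume_box]
        congr 1
        · congr 1; ring
        · congr 1; ring
      have h3 : volume Rp ≠ ⊤ := by
        rw [h2]; exact ENNReal.mul_ne_top ENNReal.ofReal_ne_top ENNReal.ofReal_ne_top
      calc (volume (Ω ∩ Rp)).toReal ≤ (volume Rp).toReal := ENNReal.toReal_mono h3 h1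
        _ = ε^7 := by
            rw [h2, ENNReal.toReal_mul, ENNReal.toReal_ofReal hε0.le,
              ENNReal.toReal_ofReal hε6.le]
            ring
    have hstrip : (∫ x in Ω ∩ Rp, ‖fderiv ℝ v x‖^2) ≤ ε^3 := by
      have h1 : (∫ x in Ω ∩ Rp, ‖fderiv ℝ v x‖^2) ≤ ∫ x in Ω ∩ Rp, K^2 := by
        apply setIntegral_mono_on (hE_int.mono_set Set.inter_subset_left)
          (integrableOn_const (lt_of_le_of_lt (measure_mono Set.inter_subset_left) hΩfin).ne)
          (hΩmeas.inter hRpmeas)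
        intro x _
        exact pow_le_pow_left₀ (norm_nonneg _) (hfderiv_bound x) 2
      rw [setIntegral_const, smul_eq_mul, measureReal_def] at h1
      have h2 : (volume (Ω ∩ Rp)).toReal * K^2 ≤ ε^7 * K^2 :=
        mul_le_mul_of_nonneg_right hRvol (by positivity)
      have h3 : ε^7 * K^2 = ε^3 := by
        rw [hKdef]
        field_simp
      linarith
    -- tail part
    have htailbd : (∫ x in Ω \ Rp, ‖fderiv ℝ v x‖^2) ≤ 52706752 * ε^3 := by
      have h1 : (∫ x in Ω \ Rp, ‖fderiv ℝ v x‖^2)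
          ≤ ∫ x in Ω \ Rp, (K * Real.exp (-(1/(2*ε))))^2 := by
        apply setIntegral_mono_on (hE_int.mono_set Set.diff_subset)
          (integrableOn_const (lt_of_le_of_lt (measure_mono Set.diff_subset) hΩfin).ne)
          (hΩmeas.diff hRpmeas)
        intro x hx
        apply pow_le_pow_left₀ (norm_nonneg _)
        exact le_trans (hfderiv_norm x) (hD_tail _ (htail x hx))
      rw [setIntegral_const, smul_eq_mul, measureReal_def] at h1
      have hexpsq : Real.exp (-(1/(2*ε)))^2 = Real.exp (-(1/ε)) := by
        rw [sq, ← Real.exp_add]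
        congr 1
        field_simp
        ring
      have h2 : (K * Real.exp (-(1/(2*ε))))^2 = K^2 * Real.exp (-(1/ε)) := by
        rw [mul_pow, hexpsq]
      have h3 : Real.exp (-(1/ε)) ≤ 823543 * ε^7 := DB.exp_tail ε hε0
      have h4 : (volume (Ω \ Rp)).toReal ≤ 64 :=
        le_trans (ENNReal.toReal_mono hΩfin.ne (measure_mono Set.diff_subset)) hΩvol64
      calc (∫ x in Ω \ Rp, ‖fderiv ℝ v x‖^2)
          ≤ (volume (Ω \ Rp)).toReal * (K * Real.exp (-(1/(2*ε))))^2 := h1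
        _ ≤ 64 * (K * Real.exp (-(1/(2*ε))))^2 :=
            mul_le_mul_of_nonneg_right h4 (by positivity)
        _ = 64 * (K^2 * Real.exp (-(1/ε))) := by rw [h2]
        _ ≤ 64 * (K^2 * (823543 * ε^7)) := by
            apply mul_le_mul_of_nonneg_left
              (mul_le_mul_of_nonneg_left h3 (by positivity)) (by norm_num)
        _ = 52706752 * ε^3 := by
            rw [hKdef]
            field_simp
            ring
    linarith
  -- conclusion
  have hmem : (∫ x in Ω, ‖fderiv ℝ v x‖^2) / (∫ x in Ω, (v x)^2)
      ∈ { R : ℝ | ∃ u : E2 → ℝ, ContDiff ℝ (⊤ : ℕ∞) u ∧ (∫ x in Ω, u x) = 0 ∧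
        (∫ x in Ω, (u x)^2) ≠ 0 ∧
        R = (∫ x in Ω, ‖fderiv ℝ u x‖^2) / (∫ x in Ω, (u x)^2) } :=
    ⟨v, hv_smooth, hmean, hmass_pos.ne', rfl⟩
  have hbdd : BddBelow { R : ℝ | ∃ u : E2 → ℝ, ContDiff ℝ (⊤ : ℕ∞) u ∧ (∫ x in Ω, u x) = 0 ∧
        (∫ x in Ω, (u x)^2) ≠ 0 ∧
        R = (∫ x in Ω, ‖fderiv ℝ u x‖^2) / (∫ x in Ω, (u x)^2) } := by
    refine ⟨0, ?_⟩
    rintro R ⟨g, -, -, -, rfl⟩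
    apply div_nonneg
    · exact integral_nonneg fun x => by positivity
    · exact integral_nonneg fun x => by positivity
  have hle2 : nEig1 Ω ≤ (∫ x in Ω, ‖fderiv ℝ v x‖^2) / (∫ x in Ω, (v x)^2) := by
    unfold nEig1
    exact csInf_le hbdd hmem
  apply le_trans hle2
  have hq1' : (∫ x in Ω, ‖fderiv ℝ v x‖^2) / (∫ x in Ω, (v x)^2)
      ≤ (52706753 * ε^3) / (ε^2 * (49/1024)) :=
    div_le_div₀ (by positivity) henergy (by positivity) hmass_ge
  apply le_trans hq1'
  have heq : (52706753 * ε^3) / (ε^2 * (49/1024)) = (52706753 * 1024/49) * ε := by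
    field_simp
  rw [heq]
  have : (52706753 * 1024/49 : ℝ) ≤ 1200000000 := by norm_num
  nlinarith [hε0.le]


/-- The first nontrivial Neumann eigenvalue of the dumbbell domain tends to `0` as
`ε → 0⁺`. -/
theorem dumbbell_neumann_tendsto_zero :
    Tendsto (fun ε => nEig1 (dumbbell ε)) (nhdsWithin 0 (Set.Ioo (0:ℝ) (1/2))) (nhds 0) := by
  have h1 : ∀ᶠ ε in nhdsWithin 0 (Set.Ioo (0:ℝ) (1/2)), 0 ≤ nEig1 (dumbbell ε) :=
    Filter.Eventually.of_forall fun ε => DB.nEig1_nonneg _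
  have h2 : ∀ᶠ ε in nhdsWithin 0 (Set.Ioo (0:ℝ) (1/2)),
      nEig1 (dumbbell ε) ≤ 1200000000 * ε := by
    filter_upwards [self_mem_nhdsWithin] with ε hε
    exact DB.key ε hε.1 hε.2
  have h3 : Tendsto (fun ε : ℝ => 1200000000 * ε)
      (nhdsWithin 0 (Set.Ioo (0:ℝ) (1/2))) (nhds 0) := by
    have ht : Tendsto (fun ε : ℝ => 1200000000 * ε) (nhds 0) (nhds 0) := by
      have hc : Continuous (fun ε : ℝ => 1200000000 * ε) := by continuity
      have := hc.tendsto 0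
      simpa using this
    exact ht.mono_left nhdsWithin_le_nhds
  exact squeeze_zero' h1 h2 h3
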